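/- If q ≥ 1, then for all x > 0, (1−q)·(sinh x)/x + q·(tanh x)/x < 1. -/
import Mathlib

lemma sinh_lt_mul_cosh {x : ℝ} (hx : 0 < x) : Real.sinh x < x * Real.cosh x := by
  have h : StrictMonoOn (fun y => y * Real.cosh y - Real.sinh y) (Set.Ici 0) := by
    apply strictMonoOn_of_deriv_pos (convex_Ici 0)
    · exact ((continuous_id.mul Real.continuous_cosh).sub Real.continuous_sinh).continuousOn
    · intro y hy
      rw [interior_Ici] at hy
      have hd : HasDerivAt (fun y => y * Real.cosh y - Real.sinh y)
          (1 * Real.cosh y + y * Real.sinh y - Real.cosh y) y :=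
        ((hasDerivAt_id y).mul (Real.hasDerivAt_cosh y)).sub (Real.hasDerivAt_sinh y)
      rw [hd.deriv]
      have hs : 0 < Real.sinh y := Real.sinh_pos_iff.mpr hy
      have hy0 : (0:ℝ) < y := hy
      nlinarith [mul_pos hy0 hs]
  have := h (Set.self_mem_Ici) (Set.mem_Ici.mpr hx.le) hx
  simp at this
  linarith

theorem weighted_huygens_hyperbolic_upper (q : ℝ) (hq : q ≥ 1) :
    ∀ x : ℝ, 0 < x →
      (1 - q) * (Real.sinh x / x) + q * (Real.tanh x / x) < 1 := by
  intro x hx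
  have hc : 1 < Real.cosh x := by
    rw [Real.one_lt_cosh]; exact ne_of_gt hx
  have hc0 : 0 < Real.cosh x := lt_trans one_pos hc
  have hs : 0 < Real.sinh x := Real.sinh_pos_iff.mpr hx
  have ht : Real.tanh x = Real.sinh x / Real.cosh x := Real.tanh_eq_sinh_div_cosh x
  have h1 : Real.tanh x < Real.sinh x := by
    rw [ht]; exact div_lt_self hs hc
  have h2 : Real.tanh x < x := by
    rw [ht, div_lt_iff₀ hc0]
    exact sinh_lt_mul_cosh hx
  have key : (1 - q) * Real.sinh x + q * Real.tanh x < x := by nlinarith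
  have : (1 - q) * (Real.sinh x / x) + q * (Real.tanh x / x)
      = ((1 - q) * Real.sinh x + q * Real.tanh x) / x := by ring
  rw [this, div_lt_one hx]
  exact key
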